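/- Let T: M → A be an O-operator on a Hom-associative algebra A with respect to the bimodule M. For f ∈ C^n_α(M,A) = Hom(M^⊗n, A), the derived-bracket differential and the Hochschild differential are related by d_T f = (−1)^n d_H f, where d_T f = ⟦T, f⟧_α and d_H is the Hochschild differential of the Hom-associative algebra (M, ⋆_T, φ) with coefficients in the bimodule (A, l_T, r_T, α). -/
import Mathlib


section

variable {V : Type*} [AddCommGroup V]

/-- Twisted Gerstenhaber circle product (cochains encoded on sequences). -/
def gcomp (β : V → V) (m n : ℕ) (f g : (ℕ → V) → V) : (ℕ → V) → V :=
  fun a => ∑ i ∈ Finset.range m, ((-1 : ℤ)) ^ (i * (n - 1)) •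
    f (fun j => if j < i then β^[n - 1] (a j)
        else if j = i then g (fun t => a (i + t))
        else β^[n - 1] (a (j + (n - 1))))

/-- Gerstenhaber bracket. -/
def gbracket (β : V → V) (m n : ℕ) (f g : (ℕ → V) → V) : (ℕ → V) → V :=
  fun a => gcomp β m n f g a - ((-1 : ℤ)) ^ ((m - 1) * (n - 1)) • gcomp β n m g f a

end

section

variable {K A M : Type*} [Field K] [AddCommGroup A] [Module K A]
  [AddCommGroup M] [Module K M]

/-- The lift `μ + l + r` as a 2-cochain on `V = A ⊕ M`. -/
def mlr (μ : A →ₗ[K] A →ₗ[K] A) (l : A →ₗ[K] M →ₗ[K] M)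
    (r : M →ₗ[K] A →ₗ[K] M) : (ℕ → A × M) → A × M :=
  fun a => (μ (a 0).1 (a 1).1, l (a 0).1 (a 1).2 + r (a 0).2 (a 1).1)

/-- The structure map `α + φ` on `V = A ⊕ M`. -/
def sdβ (α : A →ₗ[K] A) (φ : M →ₗ[K] M) : A × M → A × M :=
  fun p => (α p.1, φ p.2)

/-- The lift of `T : M → A` as a 1-cochain on `V = A ⊕ M`. -/
def liftT (T : M →ₗ[K] A) : (ℕ → A × M) → A × M :=
  fun a => (T ((a 0).2), (0 : M))

/-- The differential `d_T f = ⟦T, f⟧_α = (−1)^1 [[μ+l+r, T]_α, f]_α` of an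
`n`-cochain `f ∈ Hom(M^{⊗n}, A)` (here `n = nn + 1`, with `f` encoded on
sequences, using only its first `n` arguments). -/
def dT (μ : A →ₗ[K] A →ₗ[K] A) (α : A →ₗ[K] A)
    (l : A →ₗ[K] M →ₗ[K] M) (r : M →ₗ[K] A →ₗ[K] M) (φ : M →ₗ[K] M)
    (T : M →ₗ[K] A) (nn : ℕ) (f : (ℕ → M) → A) : (ℕ → A × M) → A × M :=
  fun a => -(gbracket (sdβ α φ) 2 (nn + 1)
      (gbracket (sdβ α φ) 2 1 (mlr μ l r) (liftT T))
      (fun b => ((f (fun i => (b i).2) : A), (0 : M))) a)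

/-- The Hochschild differential `d_H` of the Hom-associative algebra
`(M, ⋆_T, φ)` with coefficients in the bimodule `(A, l_T, r_T, α)`, applied to
an `n`-cochain `f` (`n = nn + 1`):
`(d_H f)(u₀,…,u_n) = l_T(φ^{n−1}(u₀), f(u₁,…,u_n))
  + Σ_{i=0}^{n-1} (−1)^{i+1} f(φu₀,…,φu_{i−1}, u_i ⋆_T u_{i+1}, φu_{i+2},…,φu_n)
  + (−1)^{n+1} r_T(f(u₀,…,u_{n−1}), φ^{n−1}(u_n))`. -/
def dH (μ : A →ₗ[K] A →ₗ[K] A)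
    (l : A →ₗ[K] M →ₗ[K] M) (r : M →ₗ[K] A →ₗ[K] M) (φ : M →ₗ[K] M)
    (T : M →ₗ[K] A) (nn : ℕ) (f : (ℕ → M) → A) : (ℕ → M) → A :=
  fun u =>
    (μ (T ((⇑φ)^[nn] (u 0))) (f (fun j => u (j + 1)))
      - T (r ((⇑φ)^[nn] (u 0)) (f (fun j => u (j + 1)))))
    + ∑ i ∈ Finset.range (nn + 1), ((-1 : ℤ)) ^ (i + 1) •
        f (fun j => if j < i then φ (u j)
            else if j = i then r (u i) (T (u (i + 1))) + l (T (u i)) (u (i + 1))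
            else φ (u (j + 1)))
    + ((-1 : ℤ)) ^ (nn + 2) •
        (μ (f u) (T ((⇑φ)^[nn] (u (nn + 1)))) - T (l (f u) ((⇑φ)^[nn] (u (nn + 1))))) 


lemma sdβ_iter {K A M : Type*} [Field K] [AddCommGroup A] [Module K A]
    [AddCommGroup M] [Module K M] (α : A →ₗ[K] A) (φ : M →ₗ[K] M) (k : ℕ) (x : M) :
    (sdβ α φ)^[k] ((0 : A), x) = (0, (⇑φ)^[k] x) := by
  induction k with
  | zero => simp
  | succ n ih => simp [Function.iterate_succ_apply', ih, sdβ]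

/-- for an `𝒪`-operator `T` and `f ∈ C^n_α(M,A)` (with `n = nn+1`),
the derived-bracket differential and the Hochschild differential are related by
`d_T f = (−1)^n d_H f`. -/
theorem stmt_15 (μ : A →ₗ[K] A →ₗ[K] A) (α : A →ₗ[K] A)
    (l : A →ₗ[K] M →ₗ[K] M) (r : M →ₗ[K] A →ₗ[K] M) (φ : M →ₗ[K] M)
    (hassoc : ∀ a b c : A, μ (α a) (μ b c) = μ (μ a b) (α c))
    (hmult : ∀ a b : A, α (μ a b) = μ (α a) (α b))
    (hb1 : ∀ x v, φ (l x v) = l (α x) (φ v))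
    (hb2 : ∀ v x, φ (r v x) = r (φ v) (α x))
    (hb3 : ∀ x y v, l (μ x y) (φ v) = l (α x) (l y v))
    (hb4 : ∀ v x y, r (φ v) (μ x y) = r (r v x) (α y))
    (hb5 : ∀ x v y, l (α x) (r v y) = r (l x v) (α y))
    (T : M →ₗ[K] A)
    (hTφ : ∀ u, T (φ u) = α (T u))
    (hT : ∀ u v, μ (T u) (T v) = T (l (T u) v + r u (T v)))
    (nn : ℕ) (f : (ℕ → M) → A)
    (hf : ∀ u : ℕ → M, α (f u) = f (fun i => φ (u i))) :
    ∀ u : ℕ → M,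
      dT μ α l r φ T nn f (fun i => ((0 : A), u i)) =
        (((-1 : ℤ)) ^ (nn + 1) • dH μ l r φ T nn f u, (0 : M)) := by
  intro u
  have hswap : ∀ i : ℕ, (fun j => if j < i then φ (u j)
      else if j = i then l (T (u i)) (u (i + 1)) + r (u i) (T (u (i + 1)))
      else φ (u (j + 1))) = (fun j => if j < i then φ (u j)
      else if j = i then r (u i) (T (u (i + 1))) + l (T (u i)) (u (i + 1))
      else φ (u (j + 1))) := by
    intro i; funext j; split_ifs <;> simp [add_comm]
  simp only [dT, gbracket, gcomp, mlr, liftT, sdβ, dH]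
  simp only [Finset.sum_range_succ, Finset.sum_range_zero, Finset.sum_range_one]
  have e1 : (fun i => u i) = u := rfl
  have e2 : (fun i => u (1+i)) = (fun j => u (j+1)) := by funext j; rw [Nat.add_comm]
  norm_num [sdβ_iter, apply_ite (Prod.snd (α := A) (β := M)), sdβ, e1, e2,
    Nat.add_comm 1 nn, hswap, pow_succ]
  rcases Nat.even_or_odd nn with h | h <;>
    simp [Prod.ext_iff, Prod.fst_sum, Prod.snd_sum, h.neg_one_pow, Odd.neg_one_pow] <;>
    abel

end
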